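/- arXiv:1403.5410 — 7 statements merged into one kernel-verified Lean document; each statement's English description precedes it below -/
import Mathlib

section
/- Let Λ be a matrix in SO(3) with 1 + Tr(Λ) ≠ 0. Then Λ + I₃ is invertible, the two expressions for the inverse Cayley transform agree, i.e. (2/(1+Tr Λ)) (Λ − Λᵀ) = 2 (Λ − I₃)(Λ + I₃)⁻¹, and this matrix is skew-symmetric. -/
open Matrix

noncomputable section

lemma genA (A : Matrix (Fin 3) (Fin 3) ℝ) :
    A * A - A.adjugate = A.trace • A - A.adjugate.trace • (1 : Matrix (Fin 3) (Fin 3) ℝ) := by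
  ext i j
  fin_cases i <;> fin_cases j <;>
    simp [Matrix.mul_apply, Matrix.adjugate_fin_three, Matrix.trace_fin_three,
      Fin.sum_univ_three, Matrix.one_apply] <;> ring

lemma genB (A : Matrix (Fin 3) (Fin 3) ℝ) :
    (A + 1).det = 1 + A.trace + A.adjugate.trace + A.det := by
  simp [Matrix.det_fin_three, Matrix.adjugate_fin_three, Matrix.trace_fin_three,
    Matrix.one_apply]
  ring

/-- For `Λ ∈ SO(3)` with `1 + Tr Λ ≠ 0`, the matrix `Λ + I₃` is invertible, the two
expressions for the inverse Cayley transform agree: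
`(2/(1+Tr Λ)) (Λ − Λᵀ) = 2 (Λ − I₃)(Λ + I₃)⁻¹`, and this matrix is skew-symmetric. -/
theorem inverse_cayley_formulas (Λ : Matrix (Fin 3) (Fin 3) ℝ)
    (horth : Λᵀ * Λ = 1) (hdet : Λ.det = 1) (htr : 1 + Λ.trace ≠ 0) :
    IsUnit (Λ + 1) ∧
    (2 / (1 + Λ.trace)) • (Λ - Λᵀ) = (2 : ℝ) • ((Λ - 1) * (Λ + 1)⁻¹) ∧
    ((2 : ℝ) • ((Λ - 1) * (Λ + 1)⁻¹))ᵀ = -((2 : ℝ) • ((Λ - 1) * (Λ + 1)⁻¹)) := by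
  have hmul : Λ * Λ.adjugate = 1 := by rw [Matrix.mul_adjugate, hdet, one_smul]
  have hadj : Λ.adjugate = Λᵀ := by
    calc Λ.adjugate = (Λᵀ * Λ) * Λ.adjugate := by rw [horth, one_mul]
    _ = Λᵀ * (Λ * Λ.adjugate) := by rw [mul_assoc]
    _ = Λᵀ := by rw [hmul, mul_one]
  have hdetp : (Λ + 1).det = 2 * (1 + Λ.trace) := by
    rw [genB, hadj, Matrix.trace_transpose, hdet]; ring
  have hunitdet : IsUnit (Λ + 1).det := by
    rw [hdetp]; exact isUnit_iff_ne_zero.2 (mul_ne_zero two_ne_zero htr)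
  have hA := genA Λ
  rw [hadj, Matrix.trace_transpose] at hA
  have h2 : Λ * Λ = Λ.trace • Λ - Λ.trace • (1 : Matrix (Fin 3) (Fin 3) ℝ) + Λᵀ := by
    rw [← hA]; abel
  have hkey : (Λ - Λᵀ) * (Λ + 1) = (1 + Λ.trace) • (Λ - 1) := by
    rw [sub_mul, mul_add, mul_add, mul_one, mul_one, horth, h2, add_smul, one_smul, smul_sub]
    abel
  have h3 : Λ - 1 = (1 / (1 + Λ.trace)) • ((Λ - Λᵀ) * (Λ + 1)) := by
    rw [hkey, smul_smul, one_div, inv_mul_cancel₀ htr, one_smul]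
  have hform : (Λ - 1) * (Λ + 1)⁻¹ = (1 / (1 + Λ.trace)) • (Λ - Λᵀ) := by
    rw [h3, Matrix.smul_mul, mul_assoc, Matrix.mul_nonsing_inv _ hunitdet, mul_one]
  refine ⟨(Matrix.isUnit_iff_isUnit_det _).2 hunitdet, ?_, ?_⟩
  · rw [hform, smul_smul]
    congr 1
    field_simp
  · rw [hform, ← smul_assoc]
    simp [Matrix.transpose_smul, Matrix.transpose_sub]
    module
end
end

section
/- Let ω ∈ ℝ³ with 0 < ‖ω‖ < π and let Λ := exp(ω̂) be the matrix exponential of ω̂. Then 1 + Tr(Λ) ≠ 0, Λ + I₃ is invertible, and the inverse Cayley transform of the exponential satisfies 2 (Λ − I₃)(Λ + I₃)⁻¹ = (2 sin‖ω‖ / (‖ω‖ (1 + cos‖ω‖))) ω̂ = (tan(‖ω‖/2) / (‖ω‖/2)) ω̂. -/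
/-
Since `ω̂³ = -‖ω‖² ω̂`, the exponential series of `ω̂` collapses (even terms to the cosine series,
odd terms to the sine series) to Rodrigues' formula
`Λ = 1 + (sin θ / θ) ω̂ + ((1 - cos θ) / θ²) ω̂²` with `θ = ‖ω‖`. In the commutative algebra
spanned by `1, ω̂, ω̂²` one checks `Λ - 1 = k ω̂ (Λ + 1)` with `k = sin θ / (θ (1 + cos θ))`,
so `(1 - k ω̂)(Λ + 1) = 2`: `Λ + 1` is invertible and `(Λ - 1)(Λ + 1)⁻¹ = k ω̂`. Finally
`tr ω̂ = 0` and `tr ω̂² = -2θ²` give `1 + tr Λ = 2 (1 + cos θ)`, positive for `θ < π`, and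
`sin θ / (1 + cos θ) = tan (θ / 2)` by the half-angle formulas.
-/

open Matrix

noncomputable section

/-- The hat map `ω ↦ ω̂` sending a vector in `ℝ³` to the skew-symmetric matrix
satisfying `ω̂ v = ω × v`. -/
def hat (ω : EuclideanSpace ℝ (Fin 3)) : Matrix (Fin 3) (Fin 3) ℝ :=
  !![0, -ω 2, ω 1; ω 2, 0, -ω 0; -ω 1, ω 0, 0]

open Real

section Rodrigues

variable {𝔸 : Type*} [Ring 𝔸] [Algebra ℝ 𝔸]

def rodrigues (θ : ℝ) (A : 𝔸) : 𝔸 :=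
  1 + (sin θ / θ) • A + ((1 - cos θ) / θ ^ 2) • A ^ 2

lemma pow_two_mul_add_one_of_pow_three_eq {A : 𝔸} {c : ℝ} (h : A ^ 3 = c • A) (k : ℕ) :
    A ^ (2 * k + 1) = c ^ k • A := by
  induction k with
  | zero => simp
  | succ k ih =>
    rw [show 2 * (k + 1) + 1 = 2 + (2 * k + 1) by ring, pow_add, ih, mul_smul_comm, ← pow_succ,
      h, smul_smul, pow_succ]

lemma pow_two_mul_add_two_of_pow_three_eq {A : 𝔸} {c : ℝ} (h : A ^ 3 = c • A) (k : ℕ) :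
    A ^ (2 * k + 2) = c ^ k • A ^ 2 := by
  rw [pow_succ, pow_two_mul_add_one_of_pow_three_eq h, smul_mul_assoc, ← sq]

lemma exp_eq_rodrigues [TopologicalSpace 𝔸] [IsTopologicalRing 𝔸] [T2Space 𝔸]
    [ContinuousSMul ℝ 𝔸] {A : 𝔸} {θ : ℝ} (hθ : θ ≠ 0) (h : A ^ 3 = (-θ ^ 2) • A) :
    NormedSpace.exp A = rodrigues θ A := by
  have hcos_tail : HasSum (fun k : ℕ ↦ (-1) ^ (k + 1) * θ ^ (2 * (k + 1)) / (2 * (k + 1)).factorial)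
      (cos θ - 1) := by
    simpa using (hasSum_nat_add_iff' 1).2 (hasSum_cos θ)
  have heven : HasSum (fun k : ℕ ↦ ((2 * (k + 1)).factorial : ℝ)⁻¹ • A ^ (2 * (k + 1)))
      (((1 - cos θ) / θ ^ 2) • A ^ 2) := by
    convert (hcos_tail.div_const (-θ ^ 2)).smul_const (A ^ 2) using 1
    · ext k
      rw [mul_add, mul_one, pow_two_mul_add_two_of_pow_three_eq h, smul_smul]
      congr 1
      rw [neg_pow, ← pow_mul]
      field_simp
      ring
    · rw [div_neg, ← neg_div, neg_sub]
  have hodd : HasSum (fun k : ℕ ↦ ((2 * k + 1).factorial : ℝ)⁻¹ • A ^ (2 * k + 1))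
      ((sin θ / θ) • A) := by
    convert ((hasSum_sin θ).div_const θ).smul_const A using 2 with k
    rw [pow_two_mul_add_one_of_pow_three_eq h, smul_smul]
    congr 1
    rw [neg_pow, ← pow_mul]
    field_simp
    ring
  rw [NormedSpace.exp_eq_tsum ℝ]
  have hexp := HasSum.even_add_odd (f := fun n : ℕ ↦ (n.factorial : ℝ)⁻¹ • A ^ n)
    (heven.zero_add (f := fun k : ℕ ↦ ((2 * k).factorial : ℝ)⁻¹ • A ^ (2 * k))) hodd
  refine hexp.tsum_eq.trans ?_
  simp only [rodrigues, mul_zero, Nat.factorial_zero, Nat.cast_one, inv_one, pow_zero, one_smul]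
  abel

lemma commute_rodrigues (θ : ℝ) (A : 𝔸) : Commute A (rodrigues θ A) :=
  ((Commute.one_right A).add_right ((Commute.refl A).smul_right _)).add_right
    (((Commute.refl A).pow_right 2).smul_right _)

lemma rodrigues_sub_one_eq {A : 𝔸} {θ : ℝ} (hθ : θ ≠ 0) (h : A ^ 3 = (-θ ^ 2) • A)
    (hcos : 1 + cos θ ≠ 0) :
    rodrigues θ A - 1 = (sin θ / (θ * (1 + cos θ))) • (A * (rodrigues θ A + 1)) := by
  have hmul : A * (rodrigues θ A + 1) = (1 + cos θ) • A + (sin θ / θ) • A ^ 2 := by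
    rw [rodrigues, mul_add, mul_add, mul_add, mul_one, mul_smul_comm, mul_smul_comm, ← sq,
      ← pow_succ', h]
    match_scalars
    · field_simp
      ring
    · ring
  rw [hmul, rodrigues]
  match_scalars
  · ring
  · field_simp
  · field_simp
    linear_combination -sin_sq_add_cos_sq θ

lemma isUnit_rodrigues_add_one {A : 𝔸} {θ : ℝ} (hθ : θ ≠ 0) (h : A ^ 3 = (-θ ^ 2) • A)
    (hcos : 1 + cos θ ≠ 0) : IsUnit (rodrigues θ A + 1) := by
  set k := sin θ / (θ * (1 + cos θ))
  have hinv : ((1 / 2 : ℝ) • (1 - k • A)) * (rodrigues θ A + 1) = 1 := by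
    rw [smul_mul_assoc, sub_mul, one_mul, smul_mul_assoc, ← rodrigues_sub_one_eq hθ h hcos]
    module
  have hinv' : (rodrigues θ A + 1) * ((1 / 2 : ℝ) • (1 - k • A)) = 1 := by
    have hcomm : Commute (rodrigues θ A + 1) (1 - k • A) :=
      ((Commute.one_right _).sub_right ((commute_rodrigues θ A).symm.smul_right k)).add_left
        (Commute.one_left _)
    rw [mul_smul_comm, hcomm.eq, ← smul_mul_assoc, hinv]
  exact ⟨⟨_, _, hinv', hinv⟩, rfl⟩

lemma rodrigues_sub_one_mul_inverse {A : 𝔸} {θ : ℝ} (hθ : θ ≠ 0) (h : A ^ 3 = (-θ ^ 2) • A)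
    (hcos : 1 + cos θ ≠ 0) :
    (rodrigues θ A - 1) * Ring.inverse (rodrigues θ A + 1) = (sin θ / (θ * (1 + cos θ))) • A := by
  rw [rodrigues_sub_one_eq hθ h hcos, smul_mul_assoc,
    Ring.mul_inverse_cancel_right _ _ (isUnit_rodrigues_add_one hθ h hcos)]

end Rodrigues

lemma Real.one_add_cos_pos {x : ℝ} (hx : |x| < π) : 0 < 1 + cos x := by
  have := cos_lt_cos_of_nonneg_of_le_pi (abs_nonneg x) le_rfl hx
  rw [cos_abs, cos_pi] at this
  linarith

lemma Real.sin_div_one_add_cos (x : ℝ) : sin x / (1 + cos x) = tan (x / 2) := by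
  have hsin : sin x = 2 * sin (x / 2) * cos (x / 2) := by
    rw [← sin_two_mul, mul_div_cancel₀ _ two_ne_zero]
  have hcos : 1 + cos x = 2 * cos (x / 2) ^ 2 := by
    rw [cos_sq, mul_div_cancel₀ _ two_ne_zero]
    ring
  rw [hsin, hcos, tan_eq_sin_div_cos]
  rcases eq_or_ne (cos (x / 2)) 0 with h | h
  · simp [h]
  · field_simp

lemma hat_pow_three (ω : EuclideanSpace ℝ (Fin 3)) : hat ω ^ 3 = (-‖ω‖ ^ 2) • hat ω := by
  rw [EuclideanSpace.real_norm_sq_eq, Fin.sum_univ_three]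
  ext i j
  fin_cases i <;> fin_cases j <;>
    simp [pow_succ, hat, Matrix.mul_apply, Fin.sum_univ_three] <;> ring

lemma trace_hat (ω : EuclideanSpace ℝ (Fin 3)) : (hat ω).trace = 0 := by
  simp [hat, trace_fin_three]

lemma trace_hat_sq (ω : EuclideanSpace ℝ (Fin 3)) : (hat ω ^ 2).trace = -2 * ‖ω‖ ^ 2 := by
  rw [EuclideanSpace.real_norm_sq_eq, Fin.sum_univ_three, sq]
  simp [hat, trace_fin_three]
  ring

lemma trace_rodrigues_hat {ω : EuclideanSpace ℝ (Fin 3)} (hω : ω ≠ 0) :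
    (rodrigues ‖ω‖ (hat ω)).trace = 1 + 2 * cos ‖ω‖ := by
  have hθ : ‖ω‖ ≠ 0 := norm_ne_zero_iff.2 hω
  simp only [rodrigues, trace_add, trace_smul, trace_one, trace_hat, trace_hat_sq, smul_eq_mul,
    Fintype.card_fin]
  field_simp
  ring

/-- For `ω ∈ ℝ³` with `0 < ‖ω‖ < π` and `Λ := exp(ω̂)`, one has `1 + Tr Λ ≠ 0`,
`Λ + I₃` is invertible, and the inverse Cayley transform of the exponential is
`2(Λ − I₃)(Λ + I₃)⁻¹ = (2 sin‖ω‖/(‖ω‖(1+cos‖ω‖))) ω̂ = (tan(‖ω‖/2)/(‖ω‖/2)) ω̂`. -/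
theorem inverse_cayley_of_exp (ω : EuclideanSpace ℝ (Fin 3))
    (hpos : 0 < ‖ω‖) (hlt : ‖ω‖ < Real.pi) :
    1 + (NormedSpace.exp (hat ω)).trace ≠ 0 ∧
    IsUnit (NormedSpace.exp (hat ω) + 1) ∧
    (2 : ℝ) • ((NormedSpace.exp (hat ω) - 1) * (NormedSpace.exp (hat ω) + 1)⁻¹)
      = (2 * Real.sin ‖ω‖ / (‖ω‖ * (1 + Real.cos ‖ω‖))) • hat ω ∧
    (2 * Real.sin ‖ω‖ / (‖ω‖ * (1 + Real.cos ‖ω‖))) • hat ω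
      = (Real.tan (‖ω‖ / 2) / (‖ω‖ / 2)) • hat ω := by
  have hθ : ‖ω‖ ≠ 0 := hpos.ne'
  have hω : ω ≠ 0 := norm_ne_zero_iff.1 hθ
  have hcos : 0 < 1 + cos ‖ω‖ := one_add_cos_pos (by rwa [abs_norm])
  rw [exp_eq_rodrigues hθ (hat_pow_three ω)]
  refine ⟨?_, isUnit_rodrigues_add_one hθ (hat_pow_three ω) hcos.ne', ?_, ?_⟩
  · rw [trace_rodrigues_hat hω]
    linarith
  · rw [nonsing_inv_eq_ringInverse, rodrigues_sub_one_mul_inverse hθ (hat_pow_three ω) hcos.ne',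
      smul_smul, mul_div_assoc]
  · rw [← sin_div_one_add_cos]
    field_simp
end
end

section
/- For all vectors ω, γ ∈ ℝ³, the matrix τ(ω,γ) := (I₄ − X(ω,γ)/2)⁻¹ (I₄ + X(ω,γ)/2) is the 4×4 matrix whose upper-left 3×3 block is the Cayley transform cay(ω̂) = (I₃ − ω̂/2)⁻¹ (I₃ + ω̂/2), whose upper-right 3×1 column is (4/(4+‖ω‖²)) (I₃ + (1/2)ω̂ + (1/4) ω ωᵀ) γ, and whose last row is (0,0,0,1). In particular, τ takes values in SE(3): its rotation block lies in SO(3) and its last row is (0,0,0,1). -/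
open Matrix

noncomputable section

/-- The Cayley transform `cay(ω̂) = (I₃ − ω̂/2)⁻¹ (I₃ + ω̂/2)`. -/
def cay (ω : EuclideanSpace ℝ (Fin 3)) : Matrix (Fin 3) (Fin 3) ℝ :=
  ((1 : Matrix (Fin 3) (Fin 3) ℝ) - (1/2 : ℝ) • hat ω)⁻¹ *
    ((1 : Matrix (Fin 3) (Fin 3) ℝ) + (1/2 : ℝ) • hat ω)

/-- The embedding of `se(3)` into `4×4` real matrices: `X(ω,γ)` has upper-left `3×3`
block `ω̂`, upper-right column `γ`, and zero last row. -/
def Xse (ω γ : EuclideanSpace ℝ (Fin 3)) : Matrix (Fin 4) (Fin 4) ℝ :=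
  !![0, -ω 2, ω 1, γ 0;
     ω 2, 0, -ω 0, γ 1;
     -ω 1, ω 0, 0, γ 2;
     0, 0, 0, 0]

/-- The `4×4` matrix with rotation block `Λ`, translation column `r`, and last row
`(0,0,0,1)`, i.e. the embedding of `SE(3)` into `4×4` real matrices. -/
def g4 (Λ : Matrix (Fin 3) (Fin 3) ℝ) (r : EuclideanSpace ℝ (Fin 3)) :
    Matrix (Fin 4) (Fin 4) ℝ :=
  !![Λ 0 0, Λ 0 1, Λ 0 2, r 0;
     Λ 1 0, Λ 1 1, Λ 1 2, r 1;
     Λ 2 0, Λ 2 1, Λ 2 2, r 2;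
     0, 0, 0, 1]

/-!
In block form `I₄ ± X(ω,γ)/2` is the rigid motion with rotation part `I₃ ± ω̂/2` and translation
`±γ/2`, so multiplying out in `SE(3)` gives `τ(ω,γ)` with rotation part `cay(ω̂)` and
translation `(I₃ − ω̂/2)⁻¹ γ`. That inverse comes from `ω̂² = ω ωᵀ − ‖ω‖² I₃` and `ω̂ ω = 0`.
The Cayley transform of any skew-symmetric `S` is special orthogonal: `(I − S)ᵀ = I + S`, and
`I − S`, `I + S` commute.
-/

section Cayley

variable {n R : Type*} [DecidableEq n] [CommRing R] {S : Matrix n n R}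

theorem transpose_one_sub_of_transpose_eq_neg (hS : Sᵀ = -S) : (1 - S)ᵀ = 1 + S := by
  rw [transpose_sub, transpose_one, hS, sub_neg_eq_add]

theorem transpose_one_add_of_transpose_eq_neg (hS : Sᵀ = -S) : (1 + S)ᵀ = 1 - S := by
  rw [transpose_add, transpose_one, hS, ← sub_eq_add_neg]

variable [Fintype n]

theorem cayley_transpose_mul_self (hS : Sᵀ = -S) (h : IsUnit (1 - S).det) :
    ((1 - S)⁻¹ * (1 + S))ᵀ * ((1 - S)⁻¹ * (1 + S)) = 1 := by
  have h' : IsUnit (1 + S).det := by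
    rwa [← transpose_one_sub_of_transpose_eq_neg hS, det_transpose]
  have hcomm : (1 + S) * (1 - S) = (1 - S) * (1 + S) := by noncomm_ring
  calc ((1 - S)⁻¹ * (1 + S))ᵀ * ((1 - S)⁻¹ * (1 + S))
      = (1 - S) * ((1 + S)⁻¹ * (1 - S)⁻¹) * (1 + S) := by
        rw [transpose_mul, transpose_nonsing_inv, transpose_one_sub_of_transpose_eq_neg hS,
          transpose_one_add_of_transpose_eq_neg hS]
        simp only [Matrix.mul_assoc]
    _ = (1 - S) * ((1 - S)⁻¹ * (1 + S)⁻¹) * (1 + S) := by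
        rw [← Matrix.mul_inv_rev, ← hcomm, Matrix.mul_inv_rev]
    _ = 1 := by
        rw [Matrix.mul_assoc, Matrix.mul_assoc, nonsing_inv_mul _ h', Matrix.mul_one,
          mul_nonsing_inv _ h]

theorem det_cayley (hS : Sᵀ = -S) (h : IsUnit (1 - S).det) :
    ((1 - S)⁻¹ * (1 + S)).det = 1 := by
  rw [det_mul, det_nonsing_inv, ← transpose_one_sub_of_transpose_eq_neg hS, det_transpose,
    Ring.inverse_mul_cancel _ h]

end Cayley

theorem hat_transpose (ω : EuclideanSpace ℝ (Fin 3)) : (hat ω)ᵀ = -hat ω := by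
  ext i j; fin_cases i <;> fin_cases j <;> simp [hat]

theorem hat_mulVec_self (ω : EuclideanSpace ℝ (Fin 3)) : hat ω *ᵥ ω = 0 := by
  ext i; fin_cases i <;> simp [hat, mulVec, dotProduct, Fin.sum_univ_three] <;> ring

theorem hat_mul_hat (ω : EuclideanSpace ℝ (Fin 3)) :
    hat ω * hat ω = vecMulVec ω ω - ‖ω‖ ^ 2 • (1 : Matrix (Fin 3) (Fin 3) ℝ) := by
  rw [EuclideanSpace.real_norm_sq_eq]
  ext i j; fin_cases i <;> fin_cases j <;>
    simp [hat, mul_apply, Fin.sum_univ_three, vecMulVec_apply, one_apply] <;> ring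

theorem one_sub_half_hat_mul (ω : EuclideanSpace ℝ (Fin 3)) :
    (1 - (1/2 : ℝ) • hat ω) * (1 + (1/2 : ℝ) • hat ω + (1/4 : ℝ) • vecMulVec ω ω)
      = (1 + ‖ω‖ ^ 2 / 4) • (1 : Matrix (Fin 3) (Fin 3) ℝ) := by
  have hker : hat ω * vecMulVec ω ω = 0 := by
    rw [mul_vecMulVec, hat_mulVec_self, zero_vecMulVec]
  simp only [sub_mul, mul_add, one_mul, mul_one, Matrix.smul_mul, Matrix.mul_smul, hat_mul_hat,
    hker]
  module

theorem one_sub_half_hat_mul_inv (ω : EuclideanSpace ℝ (Fin 3)) :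
    (1 - (1/2 : ℝ) • hat ω) *
        ((4 / (4 + ‖ω‖ ^ 2)) • (1 + (1/2 : ℝ) • hat ω + (1/4 : ℝ) • vecMulVec ω ω)) = 1 := by
  rw [Matrix.mul_smul, one_sub_half_hat_mul, smul_smul]
  convert one_smul ℝ (1 : Matrix (Fin 3) (Fin 3) ℝ)
  field_simp

theorem inv_one_sub_half_hat (ω : EuclideanSpace ℝ (Fin 3)) :
    (1 - (1/2 : ℝ) • hat ω)⁻¹
      = (4 / (4 + ‖ω‖ ^ 2)) • (1 + (1/2 : ℝ) • hat ω + (1/4 : ℝ) • vecMulVec ω ω) :=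
  inv_eq_right_inv (one_sub_half_hat_mul_inv ω)

theorem isUnit_det_one_sub_half_hat (ω : EuclideanSpace ℝ (Fin 3)) :
    IsUnit (1 - (1/2 : ℝ) • hat ω).det :=
  isUnit_det_of_right_inverse (one_sub_half_hat_mul_inv ω)

theorem g4_mul_g4 (Λ Λ' : Matrix (Fin 3) (Fin 3) ℝ) (r r' : EuclideanSpace ℝ (Fin 3)) :
    g4 Λ r * g4 Λ' r' = g4 (Λ * Λ') (WithLp.toLp 2 (Λ *ᵥ r' + r)) := by
  ext i j; fin_cases i <;> fin_cases j <;>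
    simp [g4, mul_apply, Fin.sum_univ_four, Fin.sum_univ_three, mulVec, dotProduct]

theorem g4_one_zero : g4 1 0 = 1 := by
  ext i j; fin_cases i <;> fin_cases j <;> simp [g4]

theorem one_add_smul_Xse_eq_g4 (c : ℝ) (ω γ : EuclideanSpace ℝ (Fin 3)) :
    1 + c • Xse ω γ = g4 (1 + c • hat ω) (c • γ) := by
  ext i j; fin_cases i <;> fin_cases j <;> simp [g4, Xse, hat]

theorem g4_apply_three (Λ : Matrix (Fin 3) (Fin 3) ℝ) (r : EuclideanSpace ℝ (Fin 3)) (j : Fin 4) :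
    g4 Λ r 3 j = ![0, 0, 0, 1] j := by
  fin_cases j <;> rfl

theorem inv_g4 {Λ : Matrix (Fin 3) (Fin 3) ℝ} (hΛ : IsUnit Λ.det) (r : EuclideanSpace ℝ (Fin 3)) :
    (g4 Λ r)⁻¹ = g4 Λ⁻¹ (WithLp.toLp 2 (-(Λ⁻¹ *ᵥ r))) := by
  refine inv_eq_right_inv ?_
  rw [g4_mul_g4, mul_nonsing_inv _ hΛ, mulVec_neg, mulVec_mulVec, mul_nonsing_inv _ hΛ,
    one_mulVec, neg_add_cancel, WithLp.toLp_zero, g4_one_zero]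

theorem cayley_Xse_eq_g4 (ω γ : EuclideanSpace ℝ (Fin 3)) :
    ((1 : Matrix (Fin 4) (Fin 4) ℝ) - (1/2 : ℝ) • Xse ω γ)⁻¹ * (1 + (1/2 : ℝ) • Xse ω γ)
      = g4 (cay ω) (WithLp.toLp 2 ((1 - (1/2 : ℝ) • hat ω)⁻¹ *ᵥ γ)) := by
  rw [sub_eq_add_neg, ← neg_smul, one_add_smul_Xse_eq_g4, one_add_smul_Xse_eq_g4, neg_smul,
    ← sub_eq_add_neg, inv_g4 (isUnit_det_one_sub_half_hat ω), g4_mul_g4]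
  congr 2
  simp only [WithLp.ofLp_smul, mulVec_smul]
  module

/-- `τ(ω,γ) = (I₄ − X(ω,γ)/2)⁻¹ (I₄ + X(ω,γ)/2)` is the `4×4` matrix with rotation block
`cay(ω̂)`, translation column `(4/(4+‖ω‖²)) (I₃ + (1/2)ω̂ + (1/4) ω ωᵀ) γ`, and last row
`(0,0,0,1)`; in particular it takes values in `SE(3)`: its rotation block is in `SO(3)`. -/
theorem tau_block_form (ω γ : EuclideanSpace ℝ (Fin 3)) :
    ((1 : Matrix (Fin 4) (Fin 4) ℝ) - (1/2 : ℝ) • Xse ω γ)⁻¹ *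
        ((1 : Matrix (Fin 4) (Fin 4) ℝ) + (1/2 : ℝ) • Xse ω γ)
      = g4 (cay ω)
          (WithLp.toLp 2 ((4 / (4 + ‖ω‖^2)) •
            (((1 : Matrix (Fin 3) (Fin 3) ℝ) + (1/2 : ℝ) • hat ω +
                (1/4 : ℝ) • vecMulVec (ω : Fin 3 → ℝ) (ω : Fin 3 → ℝ)) *ᵥ γ))) ∧
    (cay ω)ᵀ * cay ω = 1 ∧ (cay ω).det = 1 ∧
    (∀ j : Fin 4,
      (((1 : Matrix (Fin 4) (Fin 4) ℝ) - (1/2 : ℝ) • Xse ω γ)⁻¹ *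
          ((1 : Matrix (Fin 4) (Fin 4) ℝ) + (1/2 : ℝ) • Xse ω γ)) 3 j
        = ![(0 : ℝ), 0, 0, 1] j) := by
  have hS : ((1/2 : ℝ) • hat ω)ᵀ = -((1/2 : ℝ) • hat ω) := by
    rw [transpose_smul, hat_transpose, smul_neg]
  have hA := isUnit_det_one_sub_half_hat ω
  have hτ := cayley_Xse_eq_g4 ω γ
  rw [inv_one_sub_half_hat, smul_mulVec] at hτ
  exact ⟨hτ, cayley_transpose_mul_self hS hA, det_cayley hS hA,
    fun j => by rw [hτ, g4_apply_three]⟩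

end
end

section
/- Let Λ ∈ SO(3) with 1 + Tr(Λ) ≠ 0, let r ∈ ℝ³, and let g be the 4×4 matrix with upper-left block Λ, upper-right column r, and last row (0,0,0,1). Let ω ∈ ℝ³ be the unique vector with ω̂ = 2(Λ − I₃)(Λ + I₃)⁻¹ and set γ := 2(Λ + I₃)⁻¹ r. Then: (a) τ(ω,γ) := (I₄ − X(ω,γ)/2)⁻¹ (I₄ + X(ω,γ)/2) = g, and (b) X(ω,γ) = −2 (I₄ + g)⁻¹ (I₄ − g) (with I₄ + g invertible). -/
open Matrix

noncomputable section

/-!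
Put `B = Λ + 1`. For `Λ ∈ SO(3)` the adjugate of `Λ` is `Λᵀ`, which gives
`det B = 2 (1 + tr Λ) ≠ 0`. Since `B` commutes with `Λ - 1`, the defining relations of `ω` and `γ`
become `B ω̂ = 2 (Λ - 1)` and `B γ = 2 r`, which in block form say `(I + g) X = 2 (g - I)`;
moreover `det (I + g) = 2 det B ≠ 0`. Hence `X = -2 (I + g)⁻¹ (I - g)`, and then
`I - X/2 = 2 (I + g)⁻¹` and `I + X/2 = 2 (I + g)⁻¹ g`, so `τ(ω,γ) = g`.
-/

namespace Matrix

variable {n : Type*} [Fintype n] [DecidableEq n]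

section CommRing

variable {R : Type*} [CommRing R]

lemma adjugate_eq_transpose_of_transpose_mul_self_eq_one {A : Matrix n n R}
    (horth : Aᵀ * A = 1) (hdet : A.det = 1) : A.adjugate = Aᵀ :=
  calc A.adjugate = Aᵀ * A * A.adjugate := by rw [horth, Matrix.one_mul]
    _ = Aᵀ := by rw [Matrix.mul_assoc, mul_adjugate, hdet, one_smul, Matrix.mul_one]

lemma det_add_one_fin_three (A : Matrix (Fin 3) (Fin 3) R) :
    (A + 1).det = A.det + A.adjugate.trace + A.trace + 1 := by
  simp only [det_fin_three, adjugate_fin_three, trace_fin_three, Matrix.add_apply, of_apply,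
    one_apply_eq, one_apply_ne, ne_eq, Fin.reduceEq, not_false_eq_true, add_zero, cons_val',
    cons_val_zero, cons_val_one, cons_val, cons_val_fin_one, Fin.isValue]
  ring

lemma det_add_one_eq_two_mul_one_add_trace {A : Matrix (Fin 3) (Fin 3) R}
    (horth : Aᵀ * A = 1) (hdet : A.det = 1) : (A + 1).det = 2 * (1 + A.trace) := by
  rw [det_add_one_fin_three, adjugate_eq_transpose_of_transpose_mul_self_eq_one horth hdet,
    trace_transpose, hdet]
  ring

lemma add_one_mul_sub_one_mul_inv {A : Matrix n n R} (h : IsUnit (A + 1).det) :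
    (A + 1) * ((A - 1) * (A + 1)⁻¹) = A - 1 := by
  have hcomm : (A + 1) * (A - 1) = (A - 1) * (A + 1) := by noncomm_ring
  rw [← Matrix.mul_assoc, hcomm, Matrix.mul_assoc, mul_nonsing_inv _ h, Matrix.mul_one]

end CommRing

section Field

variable {K : Type*} [Field K]

lemma eq_neg_two_smul_inv_mul_of_one_add_mul_eq {g X : Matrix n n K} (hg : IsUnit (1 + g).det)
    (hX : (1 + g) * X = (2 : K) • (g - 1)) : X = (-2 : K) • ((1 + g)⁻¹ * (1 - g)) :=
  calc X = (1 + g)⁻¹ * ((1 + g) * X) := (nonsing_inv_mul_cancel_left _ X hg).symm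
    _ = (-2 : K) • ((1 + g)⁻¹ * (1 - g)) := by
      rw [hX, mul_smul_comm, ← neg_sub g 1, Matrix.mul_neg, smul_neg, neg_smul, neg_neg]

lemma one_sub_half_smul_inv_mul_one_add_half_smul [NeZero (2 : K)] {g X : Matrix n n K}
    (hg : IsUnit (1 + g).det) (hX : X = (-2 : K) • ((1 + g)⁻¹ * (1 - g))) :
    (1 - (1 / 2 : K) • X)⁻¹ * (1 + (1 / 2 : K) • X) = g := by
  have h2 : (2 : K) ≠ 0 := NeZero.ne 2
  have hhalf : (1 / 2 : K) • X = -((1 + g)⁻¹ * (1 - g)) := by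
    rw [hX, smul_smul, div_mul_eq_mul_div, one_mul, neg_div, div_self h2, neg_one_smul]
  have hminus : 1 - (1 / 2 : K) • X = (2 : K) • (1 + g)⁻¹ :=
    calc 1 - (1 / 2 : K) • X = (1 + g)⁻¹ * (1 + g) + (1 + g)⁻¹ * (1 - g) := by
          rw [hhalf, nonsing_inv_mul _ hg, sub_neg_eq_add]
      _ = (2 : K) • (1 + g)⁻¹ := by
          rw [← Matrix.mul_add, add_add_sub_cancel, ← two_smul K (1 : Matrix n n K), mul_smul_comm,
            Matrix.mul_one]
  have hplus : 1 + (1 / 2 : K) • X = (2 : K) • ((1 + g)⁻¹ * g) :=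
    calc 1 + (1 / 2 : K) • X = (1 + g)⁻¹ * (1 + g) - (1 + g)⁻¹ * (1 - g) := by
          rw [hhalf, nonsing_inv_mul _ hg, ← sub_eq_add_neg]
      _ = (2 : K) • ((1 + g)⁻¹ * g) := by
          rw [← Matrix.mul_sub, add_sub_sub_cancel, ← two_smul K g, mul_smul_comm]
  have hinv : (1 - (1 / 2 : K) • X)⁻¹ = (1 / 2 : K) • (1 + g) := by
    refine inv_eq_right_inv ?_
    rw [hminus, smul_mul_smul_comm, nonsing_inv_mul _ hg, mul_one_div_cancel h2, one_smul]
  rw [hinv, hplus, smul_mul_smul_comm, one_div_mul_cancel h2, one_smul, ← Matrix.mul_assoc,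
    mul_nonsing_inv _ hg, Matrix.one_mul]

end Field

end Matrix

section BlockForm

lemma g4_eq_reindex_fromBlocks (Λ : Matrix (Fin 3) (Fin 3) ℝ) (r : EuclideanSpace ℝ (Fin 3)) :
    g4 Λ r = reindexAlgEquiv ℝ ℝ finSumFinEquiv
      (fromBlocks Λ (replicateCol (Fin 1) r.ofLp) 0 1) := by
  ext i j
  fin_cases i <;> fin_cases j <;> rfl

lemma Xse_eq_reindex_fromBlocks (ω γ : EuclideanSpace ℝ (Fin 3)) :
    Xse ω γ = reindexAlgEquiv ℝ ℝ finSumFinEquiv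
      (fromBlocks (hat ω) (replicateCol (Fin 1) γ.ofLp) 0 0) := by
  ext i j
  fin_cases i <;> fin_cases j <;> rfl

variable {Λ : Matrix (Fin 3) (Fin 3) ℝ} {r ω γ : EuclideanSpace ℝ (Fin 3)}

lemma one_add_g4_mul_Xse (hω : (Λ + 1) * hat ω = (2 : ℝ) • (Λ - 1))
    (hγ : (Λ + 1) *ᵥ γ.ofLp = (2 : ℝ) • r.ofLp) :
    (1 + g4 Λ r) * Xse ω γ = (2 : ℝ) • (g4 Λ r - 1) := by
  rw [g4_eq_reindex_fromBlocks, Xse_eq_reindex_fromBlocks,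
    ← map_one (reindexAlgEquiv ℝ ℝ (finSumFinEquiv (m := 3) (n := 1))),
    ← map_add, ← map_mul, ← map_sub, ← map_smul, ← fromBlocks_one, fromBlocks_add,
    fromBlocks_multiply, sub_eq_add_neg, fromBlocks_neg, fromBlocks_add, fromBlocks_smul,
    add_comm 1 Λ, hω, ← replicateCol_mulVec, hγ]
  simp [sub_eq_add_neg, replicateCol_smul]

lemma det_one_add_g4 : (1 + g4 Λ r).det = 2 * (Λ + 1).det := by
  rw [g4_eq_reindex_fromBlocks, ← map_one (reindexAlgEquiv ℝ ℝ (finSumFinEquiv (m := 3) (n := 1))),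
    ← map_add, coe_reindexAlgEquiv, det_reindex_self, ← fromBlocks_one, fromBlocks_add,
    add_comm 1 Λ, add_zero, det_fromBlocks_zero₂₁, det_unique (1 + 1 : Matrix (Fin 1) (Fin 1) ℝ),
    Matrix.add_apply, one_apply_eq, one_add_one_eq_two, mul_comm]

end BlockForm

/-- Inverse of the `SE(3)` Cayley-type map: for `Λ ∈ SO(3)` with `1 + Tr Λ ≠ 0`, `r ∈ ℝ³`,
`ω` the unique vector with `ω̂ = 2(Λ − I₃)(Λ + I₃)⁻¹`, and `γ := 2(Λ + I₃)⁻¹ r`, one has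
(a) `τ(ω,γ) = g`, and (b) `X(ω,γ) = −2(I₄ + g)⁻¹(I₄ − g)` with `I₄ + g` invertible. -/
theorem tau_inverse_formula (Λ : Matrix (Fin 3) (Fin 3) ℝ)
    (horth : Λᵀ * Λ = 1) (hdet : Λ.det = 1) (htr : 1 + Λ.trace ≠ 0)
    (r ω γ : EuclideanSpace ℝ (Fin 3))
    (hω : hat ω = (2 : ℝ) • ((Λ - 1) * (Λ + 1)⁻¹))
    (hγ : γ = WithLp.toLp 2 ((2 : ℝ) • ((Λ + 1)⁻¹ *ᵥ r))) :
    ((1 : Matrix (Fin 4) (Fin 4) ℝ) - (1/2 : ℝ) • Xse ω γ)⁻¹ *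
        ((1 : Matrix (Fin 4) (Fin 4) ℝ) + (1/2 : ℝ) • Xse ω γ)
      = g4 Λ r ∧
    IsUnit ((1 : Matrix (Fin 4) (Fin 4) ℝ) + g4 Λ r) ∧
    Xse ω γ = (-2 : ℝ) • (((1 : Matrix (Fin 4) (Fin 4) ℝ) + g4 Λ r)⁻¹ *
        ((1 : Matrix (Fin 4) (Fin 4) ℝ) - g4 Λ r)) := by
  have hB : IsUnit (Λ + 1).det := by
    rw [det_add_one_eq_two_mul_one_add_trace horth hdet]
    exact (mul_ne_zero two_ne_zero htr).isUnit
  have hBω : (Λ + 1) * hat ω = (2 : ℝ) • (Λ - 1) := by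
    rw [hω, mul_smul_comm, add_one_mul_sub_one_mul_inv hB]
  have hBγ : (Λ + 1) *ᵥ γ.ofLp = (2 : ℝ) • r.ofLp := by
    rw [hγ, mulVec_smul, mulVec_mulVec, mul_nonsing_inv _ hB, one_mulVec]
  have hG : IsUnit (1 + g4 Λ r).det := by
    rw [det_one_add_g4]
    exact (mul_ne_zero two_ne_zero hB.ne_zero).isUnit
  have hX := eq_neg_two_smul_inv_mul_of_one_add_mul_eq hG (one_add_g4_mul_Xse hBω hBγ)
  exact ⟨one_sub_half_smul_inv_mul_one_add_half_smul hG hX, (isUnit_iff_isUnit_det _).2 hG, hX⟩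
end
end

section
/- (Relation between the discrete covariant momentum sums and the classical discrete momentum maps.) With the notation of the context, the following two identities hold. (i) For all integers 0 ≤ K < L ≤ N−1: 𝒥_{0,A−1}^{K,L} = Σ_{j=K+1}^{L} (J¹(j,0) + J²(j−1,0) + J³(j,A−1)) + Σ_{a=0}^{A−1} J²(L,a) + Σ_{a=0}^{A−1} (J¹(K,a) + J³(K,a)); i.e., 𝒥_{0,A−1}^{K,L} equals the spatial-boundary sum plus J⁺_L(L) − J⁻_L(K), where J⁺_L(j) := Σ_{a=0}^{A−1} J²(j,a) and J⁻_L(j) := −Σ_{a=0}^{A−1} (J¹(j,a) + J³(j,a)). (ii) For all integers 0 ≤ B < C ≤ A−1: 𝒥_{B,C}^{0,N−1} = Σ_{a=B+1}^{C} (J¹(0,a) + J²(N−1,a) + J³(0,a−1)) + Σ_{j=0}^{N−1} J³(j,C) + Σ_{j=0}^{N−1} (J¹(j,B) + J²(j,B)); i.e., 𝒥_{B,C}^{0,N−1} equals the temporal-boundary sum plus J⁺_N(C) − J⁻_N(B), where J⁺_N(a) := Σ_{j=0}^{N−1} J³(j,a) and J⁻_N(a) := −Σ_{j=0}^{N−1}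 (J¹(j,a) + J²(j,a)). -/
open Finset

lemma haux1 {M : Type*} [AddCommGroup M] (n : ℕ) (hn : 1 ≤ n) (f : ℕ → M) :
    f 0 + ∑ a ∈ Finset.Icc 1 (n-1), f a = ∑ a ∈ Finset.range n, f a := by
  obtain ⟨m, rfl⟩ := Nat.exists_eq_add_of_le hn
  rw [Nat.add_comm 1 m, Nat.add_sub_cancel, ← Finset.Ico_add_one_right_eq_Icc,
    Finset.sum_Ico_eq_sum_range, Finset.sum_range_succ']
  simp [add_comm]

lemma haux2 {M : Type*} [AddCommGroup M] (n : ℕ) (hn : 1 ≤ n) (g : ℕ → M) :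
    (∑ a ∈ Finset.Icc 1 (n-1), g (a-1)) + g (n-1) = ∑ a ∈ Finset.range n, g a := by
  obtain ⟨m, rfl⟩ := Nat.exists_eq_add_of_le hn
  rw [Nat.add_comm 1 m, Nat.add_sub_cancel, ← Finset.Ico_add_one_right_eq_Icc,
    Finset.sum_Ico_eq_sum_range, Finset.sum_range_succ]
  simp

/-- The discrete covariant Noether quantity `𝒥_{B,C}^{K,L}` built from the three discrete
covariant momentum maps `J¹, J², J³` (indexed by time index `j` and space index `a`):
`𝒥_{B,C}^{K,L} = Σ_{j=K+1}^{L} (J¹(j,B) + J²(j−1,B) + J³(j,C))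
  + Σ_{a=B+1}^{C} (J¹(K,a) + J²(L,a) + J³(K,a−1)) + J¹(K,B) + J²(L,B) + J³(K,C)`. -/
def covNoether {M : Type*} [AddCommGroup M] (J1 J2 J3 : ℕ → ℕ → M)
    (K L B C : ℕ) : M :=
  (∑ j ∈ Finset.Icc (K+1) L, (J1 j B + J2 (j-1) B + J3 j C))
    + (∑ a ∈ Finset.Icc (B+1) C, (J1 K a + J2 L a + J3 K (a-1)))
    + (J1 K B + J2 L B + J3 K C)

/-- Relation between the discrete covariant momentum sums and the classical discrete
momentum maps: (i) for `0 ≤ K < L ≤ N−1`, `𝒥_{0,A−1}^{K,L}` equals the spatial-boundary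
sum plus `J⁺_L(L) − J⁻_L(K)` where `J⁺_L(j) = Σ_a J²(j,a)` and
`J⁻_L(j) = −Σ_a (J¹(j,a) + J³(j,a))`; (ii) for `0 ≤ B < C ≤ A−1`, `𝒥_{B,C}^{0,N−1}`
equals the temporal-boundary sum plus `J⁺_N(C) − J⁻_N(B)` where
`J⁺_N(a) = Σ_j J³(j,a)` and `J⁻_N(a) = −Σ_j (J¹(j,a) + J²(j,a))`. -/
theorem covNoether_eq_boundary_plus_momenta {M : Type*} [AddCommGroup M]
    (N A : ℕ) (hN : 1 ≤ N) (hA : 1 ≤ A) (J1 J2 J3 : ℕ → ℕ → M) :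
    (∀ K L : ℕ, K < L → L ≤ N - 1 →
      covNoether J1 J2 J3 K L 0 (A-1)
        = (∑ j ∈ Finset.Icc (K+1) L, (J1 j 0 + J2 (j-1) 0 + J3 j (A-1)))
            + (∑ a ∈ Finset.range A, J2 L a)
            + (∑ a ∈ Finset.range A, (J1 K a + J3 K a))) ∧
    (∀ B C : ℕ, B < C → C ≤ A - 1 →
      covNoether J1 J2 J3 0 (N-1) B C
        = (∑ a ∈ Finset.Icc (B+1) C, (J1 0 a + J2 (N-1) a + J3 0 (a-1)))
            + (∑ j ∈ Finset.range N, J3 j C)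
            + (∑ j ∈ Finset.range N, (J1 j B + J2 j B))) := by
  constructor
  · intro K L hKL hL
    unfold covNoether
    rw [show (0:ℕ)+1 = 1 from rfl]
    simp only [Finset.sum_add_distrib]
    rw [← haux1 A hA (fun a => J2 L a), ← haux1 A hA (fun a => J1 K a),
      ← haux2 A hA (fun a => J3 K a)]
    abel
  · intro B C hBC hC
    unfold covNoether
    rw [show (0:ℕ)+1 = 1 from rfl]
    simp only [Finset.sum_add_distrib]
    rw [← haux1 N hN (fun j => J3 j C), ← haux1 N hN (fun j => J1 j B),
      ← haux2 N hN (fun j => J2 j B)]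
    abel
end

section
/- (Discrete covariant Noether theorem.) With the notation of the context, assume: (i) invariance per triangle: J¹(j,a) + J²(j,a) + J³(j,a) = 0 for all 0 ≤ j ≤ N−1 and 0 ≤ a ≤ A−1; and (ii) the discrete covariant Euler–Lagrange relations at interior nodes: J¹(j,a) + J²(j−1,a) + J³(j,a−1) = 0 for all 1 ≤ j ≤ N−1 and 1 ≤ a ≤ A−1. Then the covariant Noether quantity vanishes on every subrectangle: 𝒥_{B,C}^{K,L} = 0 for all integers 0 ≤ K < L ≤ N−1 and 0 ≤ B < C ≤ A−1. -/
open Finset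

/-- Split off the bottom term of a sum over `Icc K L`. -/
lemma covNoether_split_bot {M : Type*} [AddCommGroup M] (f : ℕ → M) {K L : ℕ} (h : K ≤ L) :
    ∑ x ∈ Finset.Icc K L, f x = f K + ∑ x ∈ Finset.Icc (K+1) L, f x := by
  rw [Finset.Icc_eq_cons_Ioc h, Finset.sum_cons, Finset.Icc_add_one_left_eq_Ioc]

/-- Telescoping sum over `Icc (K+1) L`. -/
lemma covNoether_tele {M : Type*} [AddCommGroup M] (g : ℕ → M) {K L : ℕ} (h : K ≤ L) :
    ∑ j ∈ Finset.Icc (K+1) L, (g j - g (j-1)) = g L - g K := by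
  induction L, h using Nat.le_induction with
  | base => simp
  | succ n hn ih =>
      rw [Finset.sum_Icc_succ_top (by omega), ih]
      simp only [Nat.add_sub_cancel]
      abel

/-- Discrete covariant Noether theorem: if the discrete Lagrangian is invariant
(per triangle, `J¹(j,a) + J²(j,a) + J³(j,a) = 0`) and the discrete covariant
Euler–Lagrange relations hold at interior nodes
(`J¹(j,a) + J²(j−1,a) + J³(j,a−1) = 0`), then the covariant Noether quantity vanishes
on every subrectangle: `𝒥_{B,C}^{K,L} = 0`. -/
theorem discrete_covariant_Noether {M : Type*} [AddCommGroup M]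
    (N A : ℕ) (hN : 1 ≤ N) (hA : 1 ≤ A) (J1 J2 J3 : ℕ → ℕ → M)
    (hinv : ∀ j a : ℕ, j ≤ N - 1 → a ≤ A - 1 → J1 j a + J2 j a + J3 j a = 0)
    (hDEL : ∀ j a : ℕ, 1 ≤ j → j ≤ N - 1 → 1 ≤ a → a ≤ A - 1 →
      J1 j a + J2 (j-1) a + J3 j (a-1) = 0) :
    ∀ K L B C : ℕ, K < L → L ≤ N - 1 → B < C → C ≤ A - 1 →
      covNoether J1 J2 J3 K L B C = 0 := by
  intro K L B C hKL hLN hBC hCA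
  have hK : K ≤ L := le_of_lt hKL
  have hB : B ≤ C := le_of_lt hBC
  -- the full-rectangle sum of invariance triples vanishes
  have hS : (∑ j ∈ Finset.Icc K L, ∑ a ∈ Finset.Icc B C, (J1 j a + J2 j a + J3 j a)) = 0 := by
    refine Finset.sum_eq_zero fun j hj => Finset.sum_eq_zero fun a ha => ?_
    rw [Finset.mem_Icc] at hj ha
    exact hinv j a (by omega) (by omega)
  -- the interior sum of Euler–Lagrange triples vanishes
  have hT : (∑ j ∈ Finset.Icc (K+1) L, ∑ a ∈ Finset.Icc (B+1) C,
      (J1 j a + J2 (j-1) a + J3 j (a-1))) = 0 := by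
    refine Finset.sum_eq_zero fun j hj => Finset.sum_eq_zero fun a ha => ?_
    rw [Finset.mem_Icc] at hj ha
    exact hDEL j a (by omega) (by omega) (by omega) (by omega)
  -- it suffices to show 𝒥 + T = S
  suffices h : covNoether J1 J2 J3 K L B C
      + (∑ j ∈ Finset.Icc (K+1) L, ∑ a ∈ Finset.Icc (B+1) C,
            (J1 j a + J2 (j-1) a + J3 j (a-1)))
      = (∑ j ∈ Finset.Icc K L, ∑ a ∈ Finset.Icc B C, (J1 j a + J2 j a + J3 j a)) by
    rw [hT, hS, add_zero] at h
    exact h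
  -- split S
  have eS : (∑ j ∈ Finset.Icc K L, ∑ a ∈ Finset.Icc B C, (J1 j a + J2 j a + J3 j a))
      = (J1 K B + J2 K B + J3 K B)
        + (∑ a ∈ Finset.Icc (B+1) C, (J1 K a + J2 K a + J3 K a))
        + ((∑ j ∈ Finset.Icc (K+1) L, (J1 j B + J2 j B + J3 j B))
        + (∑ j ∈ Finset.Icc (K+1) L, ∑ a ∈ Finset.Icc (B+1) C, (J1 j a + J2 j a + J3 j a))) := by
    rw [covNoether_split_bot _ hK, covNoether_split_bot _ hB]
    have : ∀ j, ∑ a ∈ Finset.Icc B C, (J1 j a + J2 j a + J3 j a)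
        = (J1 j B + J2 j B + J3 j B) + ∑ a ∈ Finset.Icc (B+1) C, (J1 j a + J2 j a + J3 j a) :=
      fun j => covNoether_split_bot _ hB
    simp_rw [this, Finset.sum_add_distrib]
  -- the interior difference telescopes
  have eD : (∑ j ∈ Finset.Icc (K+1) L, ∑ a ∈ Finset.Icc (B+1) C, (J1 j a + J2 j a + J3 j a))
      - (∑ j ∈ Finset.Icc (K+1) L, ∑ a ∈ Finset.Icc (B+1) C, (J1 j a + J2 (j-1) a + J3 j (a-1)))
      = (∑ a ∈ Finset.Icc (B+1) C, (J2 L a - J2 K a))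
        + (∑ j ∈ Finset.Icc (K+1) L, (J3 j C - J3 j B)) := by
    rw [← Finset.sum_sub_distrib]
    simp_rw [← Finset.sum_sub_distrib]
    have h1 : ∀ j a : ℕ, (J1 j a + J2 j a + J3 j a) - (J1 j a + J2 (j-1) a + J3 j (a-1))
        = (J2 j a - J2 (j-1) a) + (J3 j a - J3 j (a-1)) := by intro j a; abel
    simp_rw [h1, Finset.sum_add_distrib]
    congr 1
    · rw [Finset.sum_comm]
      exact Finset.sum_congr rfl fun a _ => covNoether_tele (fun j => J2 j a) hK
    · exact Finset.sum_congr rfl fun j _ => covNoether_tele (fun a => J3 j a) hB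
  -- rewrite shifted sums via telescoping
  have eJ2 : (∑ j ∈ Finset.Icc (K+1) L, J2 (j-1) B)
      = (∑ j ∈ Finset.Icc (K+1) L, J2 j B) - (J2 L B - J2 K B) := by
    have h := covNoether_tele (fun j => J2 j B) hK
    rw [Finset.sum_sub_distrib] at h
    rw [eq_sub_iff_add_eq, ← h]
    abel
  have eJ3 : (∑ a ∈ Finset.Icc (B+1) C, J3 K (a-1))
      = (∑ a ∈ Finset.Icc (B+1) C, J3 K a) - (J3 K C - J3 K B) := by
    have h := covNoether_tele (fun a => J3 K a) hB
    rw [Finset.sum_sub_distrib] at h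
    rw [eq_sub_iff_add_eq, ← h]
    abel
  rw [sub_eq_iff_eq_add] at eD
  rw [eS, eD]
  unfold covNoether
  simp_rw [Finset.sum_add_distrib, Finset.sum_sub_distrib, eJ2, eJ3]
  abel
end

section
/- (Conservation of the discrete momentum maps under boundary conditions.) With the notation of the context, assume: (i) invariance per triangle: J¹(j,a) + J²(j,a) + J³(j,a) = 0 for all 0 ≤ j ≤ N−1 and 0 ≤ a ≤ A−1; and (ii) the discrete covariant Euler–Lagrange relations at interior nodes: J¹(j,a) + J²(j−1,a) + J³(j,a−1) = 0 for all 1 ≤ j ≤ N−1 and 1 ≤ a ≤ A−1. Then: (A) (time evolution, zero-traction spatial boundary conditions) if moreover J¹(j,0) + J²(j−1,0) = 0 and J³(j,A−1) = 0 for all 1 ≤ j ≤ N−1, then the discrete momentum map of the time evolution is conserved: Σ_{a=0}^{A−1} J²(j,a) = Σ_{a=0}^{A−1} J²(j−1,a) for all 1 ≤ j ≤ N−1; and (B) (space evolution, zero-momentum temporal boundary conditions) if moreover J¹(0,a) + J³(0,a−1) = 0 and J²(N−1,a) = 0 for all 1 ≤ a ≤ A−1, then the discrete momentum map of the space evolution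 is conserved: Σ_{j=0}^{N−1} J³(j,a) = Σ_{j=0}^{N−1} J³(j,a−1) for all 1 ≤ a ≤ A−1. -/
open Finset

/-- Conservation of the discrete momentum maps under boundary conditions. Assume
per-triangle invariance (`J¹(j,a) + J²(j,a) + J³(j,a) = 0`) and the discrete covariant
Euler–Lagrange relations at interior nodes (`J¹(j,a) + J²(j−1,a) + J³(j,a−1) = 0`).
Then: (A) under zero-traction spatial boundary conditions
(`J¹(j,0) + J²(j−1,0) = 0` and `J³(j,A−1) = 0` for `1 ≤ j ≤ N−1`), the discrete momentum
map of the time evolution `Σ_{a=0}^{A−1} J²(j,a)` is conserved; and (B) under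
zero-momentum temporal boundary conditions (`J¹(0,a) + J³(0,a−1) = 0` and
`J²(N−1,a) = 0` for `1 ≤ a ≤ A−1`), the discrete momentum map of the space evolution
`Σ_{j=0}^{N−1} J³(j,a)` is conserved. -/
theorem discrete_momentum_conservation {M : Type*} [AddCommGroup M]
    (N A : ℕ) (hN : 1 ≤ N) (hA : 1 ≤ A) (J1 J2 J3 : ℕ → ℕ → M)
    (hinv : ∀ j a : ℕ, j ≤ N - 1 → a ≤ A - 1 → J1 j a + J2 j a + J3 j a = 0)
    (hDEL : ∀ j a : ℕ, 1 ≤ j → j ≤ N - 1 → 1 ≤ a → a ≤ A - 1 →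
      J1 j a + J2 (j-1) a + J3 j (a-1) = 0) :
    ((∀ j : ℕ, 1 ≤ j → j ≤ N - 1 → J1 j 0 + J2 (j-1) 0 = 0) →
      (∀ j : ℕ, 1 ≤ j → j ≤ N - 1 → J3 j (A-1) = 0) →
      ∀ j : ℕ, 1 ≤ j → j ≤ N - 1 →
        (∑ a ∈ Finset.range A, J2 j a) = ∑ a ∈ Finset.range A, J2 (j-1) a) ∧
    ((∀ a : ℕ, 1 ≤ a → a ≤ A - 1 → J1 0 a + J3 0 (a-1) = 0) →
      (∀ a : ℕ, 1 ≤ a → a ≤ A - 1 → J2 (N-1) a = 0) →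
      ∀ a : ℕ, 1 ≤ a → a ≤ A - 1 →
        (∑ j ∈ Finset.range N, J3 j a) = ∑ j ∈ Finset.range N, J3 j (a-1)) := by
  constructor
  · intro hb1 hb2 j hj1 hj2
    have hAle : ∀ a, a < A → a ≤ A - 1 := fun a h => Nat.le_pred_of_lt h
    set f : ℕ → M := fun a => Nat.rec 0 (fun b _ => J3 j b) a with hf
    have key : ∀ a ∈ Finset.range A, J2 j a - J2 (j-1) a = f a - f (a+1) := by
      intro a ha
      rw [Finset.mem_range] at ha
      have h1 := hinv j a hj2 (hAle a ha)
      match a with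
      | 0 =>
        have h2 := hb1 j hj1 hj2
        calc J2 j 0 - J2 (j-1) 0
            = (J1 j 0 + J2 j 0 + J3 j 0) - (J1 j 0 + J2 (j-1) 0) - J3 j 0 := by abel
          _ = f 0 - f 1 := by rw [h1, h2]; show (0:M) - 0 - J3 j 0 = 0 - J3 j 0; abel
      | b+1 =>
        have h2 := hDEL j (b+1) hj1 hj2 (Nat.succ_pos b) (hAle _ ha)
        simp only [Nat.add_sub_cancel] at h2
        calc J2 j (b+1) - J2 (j-1) (b+1)
            = (J1 j (b+1) + J2 j (b+1) + J3 j (b+1))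
              - (J1 j (b+1) + J2 (j-1) (b+1) + J3 j b) + J3 j b - J3 j (b+1) := by abel
          _ = f (b+1) - f (b+2) := by
              rw [h1, h2]
              show (0:M) - 0 + J3 j b - J3 j (b+1) = J3 j b - J3 j (b+1); abel
    have hsum : ∑ a ∈ Finset.range A, (J2 j a - J2 (j-1) a) = 0 := by
      rw [Finset.sum_congr rfl key, Finset.sum_range_sub']
      obtain ⟨B, rfl⟩ : ∃ B, A = B + 1 := ⟨A - 1, by omega⟩
      have := hb2 j hj1 hj2
      simp only [Nat.add_sub_cancel] at this
      show (0:M) - J3 j B = 0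
      rw [this]; abel
    rw [Finset.sum_sub_distrib] at hsum
    exact sub_eq_zero.mp hsum
  · intro hb1 hb2 a ha1 ha2
    have hNle : ∀ j, j < N → j ≤ N - 1 := fun j h => Nat.le_pred_of_lt h
    set f : ℕ → M := fun j => Nat.rec 0 (fun k _ => J2 k a) j with hf
    have key : ∀ j ∈ Finset.range N, J3 j a - J3 j (a-1) = f j - f (j+1) := by
      intro j hj
      rw [Finset.mem_range] at hj
      have h1 := hinv j a (hNle j hj) ha2
      match j with
      | 0 =>
        have h2 := hb1 a ha1 ha2
        calc J3 0 a - J3 0 (a-1)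
            = (J1 0 a + J2 0 a + J3 0 a) - (J1 0 a + J3 0 (a-1)) - J2 0 a := by abel
          _ = f 0 - f 1 := by rw [h1, h2]; show (0:M) - 0 - J2 0 a = 0 - J2 0 a; abel
      | k+1 =>
        have h2 := hDEL (k+1) a (Nat.succ_pos k) (hNle _ hj) ha1 ha2
        simp only [Nat.add_sub_cancel] at h2
        calc J3 (k+1) a - J3 (k+1) (a-1)
            = (J1 (k+1) a + J2 (k+1) a + J3 (k+1) a)
              - (J1 (k+1) a + J2 k a + J3 (k+1) (a-1)) + J2 k a - J2 (k+1) a := by abel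
          _ = f (k+1) - f (k+2) := by
              rw [h1, h2]
              show (0:M) - 0 + J2 k a - J2 (k+1) a = J2 k a - J2 (k+1) a; abel
    have hsum : ∑ j ∈ Finset.range N, (J3 j a - J3 j (a-1)) = 0 := by
      rw [Finset.sum_congr rfl key, Finset.sum_range_sub']
      obtain ⟨B, rfl⟩ : ∃ B, N = B + 1 := ⟨N - 1, by omega⟩
      have := hb2 a ha1 ha2
      simp only [Nat.add_sub_cancel] at this
      show (0:M) - J2 B a = 0
      rw [this]; abel
    rw [Finset.sum_sub_distrib] at hsum
    exact sub_eq_zero.mp hsum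
end
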